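/- arXiv:1210.0639 — 5 statements merged into one kernel-verified Lean document; each statement's English description precedes it below -/
import Mathlib

section
/- Let Λ be a finite dimensional algebra over a field k, M a finite dimensional right Λ-module, S a simple Λ-module, and e an idempotent of Λ such that multiplication by e is the identity on S and annihilates every simple Λ-module not isomorphic to S. Suppose 0 ⊆ L ⊆ N ⊆ M is a chain of Λ-submodules such that M/N has no composition factor isomorphic to S and every simple subquotient of N/L is isomorphic to S. If W is a k-subspace of N with N = L ⊕ W (as k-vector spaces), then right multiplication by e induces a k-linear isomorphism from W ⊕ Le onto Me, and Me = We ⊕ Le. -/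
/-!
Since `e` is idempotent, it suffices that `e` kill every simple subquotient of `M/N` to get
`Me ⊆ N`: for `N ⊆ X ⊂ Y` with `Y/X` simple, `Ye ⊆ X`, so `Ye = Yee ⊆ Xe`, and one descends
to `N` by artinian induction. Applied to the idempotent `1 - e`, which kills every
simple subquotient of `N/L`, the same argument gives `m - me ∈ L` for `m ∈ N`. Hence right
multiplication by `e` is a projection whose image lies in `N = L ⊕ W`, which preserves `L` and
is congruent to the identity modulo `L` on `W`; the remaining claims are linear algebra.
-/

open LinearMap Submodule

namespace Submodule

variable {R M : Type*} [Ring R] [AddCommGroup M] [Module R M]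

theorem smul_mem_of_smul_subquotient_eq_zero {X Y : Submodule R M} {r : R}
    (h : ∀ q : Y ⧸ X.comap Y.subtype, r • q = 0) {y : M} (hy : y ∈ Y) : r • y ∈ X := by
  have := h (Quotient.mk ⟨y, hy⟩)
  rwa [← Quotient.mk_smul, Quotient.mk_eq_zero] at this

theorem smul_mem_of_smul_simple_subquotient_eq_zero [IsArtinian R M] [IsNoetherian R M]
    {e : R} (he : IsIdempotentElem e) {N Z : Submodule R M} (hNZ : N ≤ Z)
    (h : ∀ X Y : Submodule R M, N ≤ X → X ≤ Y → Y ≤ Z →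
      IsSimpleModule R (Y ⧸ X.comap Y.subtype) → ∀ q : Y ⧸ X.comap Y.subtype, e • q = 0) :
    ∀ z ∈ Z, e • z ∈ N := by
  induction Z using WellFoundedLT.induction with
  | _ Z ih =>
  intro z hz
  rcases hNZ.eq_or_lt with rfl | hlt
  · exact N.smul_mem e hz
  obtain ⟨X, hNX, hXZ⟩ := exists_le_covBy_of_lt hlt
  have hX : ∀ x ∈ X, e • x ∈ N :=
    ih X hXZ.lt hNX fun X' Y' h₁ h₂ h₃ => h X' Y' h₁ h₂ (h₃.trans hXZ.le)
  have hsimple := (covBy_iff_quot_is_simple hXZ.le).mp hXZ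
  simpa only [smul_smul, he.eq] using
    hX _ (smul_mem_of_smul_subquotient_eq_zero (h X Z hNX hXZ.le le_rfl hsimple) hz)

end Submodule

section Projection

variable {k M : Type*} [Ring k] [AddCommGroup M] [Module k M] {f : M →ₗ[k] M}
  {L W : Submodule k M}

theorem map_map_of_isIdempotentElem (hf : IsIdempotentElem f) (p : Submodule k M) :
    (p.map f).map f = p.map f := by
  rw [← map_comp, ← Module.End.mul_eq_comp, hf.eq]

theorem range_eq_map_sup_map (hf : IsIdempotentElem f) (hrange : range f ≤ L ⊔ W) :
    range f = W.map f ⊔ L.map f := by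
  refine le_antisymm ?_ (sup_le (map_le_range) (map_le_range))
  calc range f = (range f).map f := by rw [range_eq_map, map_map_of_isIdempotentElem hf]
    _ ≤ (L ⊔ W).map f := map_mono hrange
    _ = W.map f ⊔ L.map f := by rw [Submodule.map_sup, sup_comm]

theorem eq_zero_of_mem_of_apply_mem (hLW : Disjoint L W) (hW : ∀ w ∈ W, f w - w ∈ L)
    {w : M} (hw : w ∈ W) (hfw : f w ∈ L) : w = 0 :=
  disjoint_def.mp hLW w (by simpa using L.sub_mem hfw (hW w hw)) hw

theorem disjoint_map_map (hLW : Disjoint L W) (hW : ∀ w ∈ W, f w - w ∈ L)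
    (hfL : L.map f ≤ L) : Disjoint (W.map f) (L.map f) := by
  rw [disjoint_def]
  rintro _ ⟨w, hw, rfl⟩ hfw
  rw [eq_zero_of_mem_of_apply_mem hLW hW hw (hfL hfw), map_zero]

theorem disjoint_sup_map_ker (hf : IsIdempotentElem f) (hLW : Disjoint L W)
    (hW : ∀ w ∈ W, f w - w ∈ L) (hfL : L.map f ≤ L) : Disjoint (W ⊔ L.map f) (ker f) := by
  rw [disjoint_def]
  rintro _ hx hker
  obtain ⟨w, hw, _, ⟨l, hl, rfl⟩, rfl⟩ := mem_sup.mp hx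
  have hsum : f w + f l = 0 := by
    rwa [mem_ker, map_add, ← Module.End.mul_apply, hf.eq] at hker
  have hw0 : w = 0 := by
    refine eq_zero_of_mem_of_apply_mem hLW hW hw ?_
    rw [eq_neg_of_add_eq_zero_left hsum]
    exact neg_mem (hfL ⟨l, hl, rfl⟩)
  subst hw0
  simpa using hsum

end Projection

theorem stmt0_general (k : Type) [Field k] (Λ : Type) [Ring Λ] [Algebra k Λ]
    (M : Type) [AddCommGroup M] [Module Λ M] [Module k M] [IsScalarTower k Λ M]
    [FiniteDimensional k M]
    (S : Type) [AddCommGroup S] [Module Λ S]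
    (e : Λ) (he : e * e = e)
    (heS : ∀ s : S, e • s = s)
    (heS' : ∀ (S' : Type) [AddCommGroup S'] [Module Λ S'], IsSimpleModule Λ S' →
      IsEmpty (S' ≃ₗ[Λ] S) → ∀ s : S', e • s = 0)
    (L N : Submodule Λ M)
    -- `M/N` has no composition factor isomorphic to `S`:
    (hMN : ∀ X Y : Submodule Λ M, N ≤ X → X ≤ Y →
      IsSimpleModule Λ (↥Y ⧸ (X.comap Y.subtype)) →
      IsEmpty ((↥Y ⧸ (X.comap Y.subtype)) ≃ₗ[Λ] S))
    -- every simple subquotient of `N/L` is isomorphic to `S`: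
    (hNL : ∀ X Y : Submodule Λ M, L ≤ X → X ≤ Y → Y ≤ N →
      IsSimpleModule Λ (↥Y ⧸ (X.comap Y.subtype)) →
      Nonempty ((↥Y ⧸ (X.comap Y.subtype)) ≃ₗ[Λ] S))
    (W : Submodule k M)
    (hdisj : Disjoint (L.restrictScalars k) W)
    (hsum : L.restrictScalars k ⊔ W = N.restrictScalars k) :
    -- `f` is "right multiplication by `e`" (the `k`-linear action of `e` on `M`):
    ∀ f : M →ₗ[k] M, (∀ m : M, f m = e • m) →
      -- `W ⊕ Le` maps isomorphically onto `Me`: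
      Disjoint W ((L.restrictScalars k).map f) ∧
      Disjoint (W ⊔ (L.restrictScalars k).map f) (LinearMap.ker f) ∧
      (W ⊔ (L.restrictScalars k).map f).map f = (⊤ : Submodule k M).map f ∧
      -- and `Me = We ⊕ Le`:
      (⊤ : Submodule k M).map f = W.map f ⊔ (L.restrictScalars k).map f ∧
      Disjoint (W.map f) ((L.restrictScalars k).map f) := by
  have : IsNoetherian Λ M := isNoetherian_of_tower k inferInstance
  have : IsArtinian Λ M := isArtinian_of_tower k inferInstance
  have he' : IsIdempotentElem e := he
  have hmemN : ∀ {m : M}, m ∈ L.restrictScalars k ⊔ W → m ∈ N := fun hm => by rwa [hsum] at hm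
  have hLN : L ≤ N := fun _ hl => hmemN (mem_sup_left hl)
  have hM : ∀ m : M, e • m ∈ N := fun m =>
    smul_mem_of_smul_simple_subquotient_eq_zero he' le_top
      (fun X Y hNX hXY _ hsimple => heS' _ hsimple (hMN X Y hNX hXY hsimple)) m trivial
  have hN : ∀ m ∈ N, (1 - e) • m ∈ L :=
    smul_mem_of_smul_simple_subquotient_eq_zero he'.one_sub hLN
      fun X Y hLX hXY hYN hsimple q => by
        obtain ⟨φ⟩ := hNL X Y hLX hXY hYN hsimple
        have heq : e • q = q := φ.injective (by rw [map_smul, heS])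
        rw [sub_smul, one_smul, heq, sub_self]
  intro f hf
  have hfe : IsIdempotentElem f := LinearMap.ext fun m => by
    simp only [Module.End.mul_apply, hf, smul_smul, he]
  have hfL : (L.restrictScalars k).map f ≤ L.restrictScalars k := by
    rintro _ ⟨l, hl, rfl⟩
    rw [hf]
    exact L.smul_mem e hl
  have hW : ∀ w ∈ W, f w - w ∈ L.restrictScalars k := fun w hw => by
    have := neg_mem (hN w (hmemN (mem_sup_right hw)))
    rwa [sub_smul, one_smul, neg_sub, ← hf] at this
  have hrange : range f ≤ L.restrictScalars k ⊔ W := by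
    rintro _ ⟨m, rfl⟩
    rw [hsum, hf]
    exact hM m
  have himage := range_eq_map_sup_map hfe hrange
  rw [Submodule.map_top]
  refine ⟨hdisj.symm.mono_right hfL, disjoint_sup_map_ker hfe hdisj hW hfL, ?_, himage,
    disjoint_map_map hdisj hW hfL⟩
  rw [Submodule.map_sup, map_map_of_isIdempotentElem hfe, himage]

/-- Let `Λ` be a finite dimensional algebra over a field `k`, `M` a finite
dimensional `Λ`-module, `S` a simple `Λ`-module, and `e ∈ Λ` an idempotent acting as the
identity on `S` and annihilating every simple `Λ`-module not isomorphic to `S`. Suppose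
`0 ⊆ L ⊆ N ⊆ M` are `Λ`-submodules such that `M/N` has no composition factor isomorphic
to `S` and every simple subquotient of `N/L` is isomorphic to `S`. If `W` is a
`k`-subspace of `N` with `N = L ⊕ W` (as `k`-spaces), then multiplication by `e` induces
a `k`-linear isomorphism `W ⊕ Le ≅ Me`, and `Me = We ⊕ Le`. -/
theorem stmt0 (k : Type) [Field k] (Λ : Type) [Ring Λ] [Algebra k Λ]
    [FiniteDimensional k Λ]
    (M : Type) [AddCommGroup M] [Module Λ M] [Module k M] [IsScalarTower k Λ M]
    [SMulCommClass k Λ M] [FiniteDimensional k M]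
    (S : Type) [AddCommGroup S] [Module Λ S] [IsSimpleModule Λ S]
    (e : Λ) (he : e * e = e)
    (heS : ∀ s : S, e • s = s)
    (heS' : ∀ (S' : Type) [AddCommGroup S'] [Module Λ S'], IsSimpleModule Λ S' →
      IsEmpty (S' ≃ₗ[Λ] S) → ∀ s : S', e • s = 0)
    (L N : Submodule Λ M) (hLN : L ≤ N)
    -- `M/N` has no composition factor isomorphic to `S`:
    (hMN : ∀ X Y : Submodule Λ M, N ≤ X → X ≤ Y →
      IsSimpleModule Λ (↥Y ⧸ (X.comap Y.subtype)) →
      IsEmpty ((↥Y ⧸ (X.comap Y.subtype)) ≃ₗ[Λ] S))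
    -- every simple subquotient of `N/L` is isomorphic to `S`:
    (hNL : ∀ X Y : Submodule Λ M, L ≤ X → X ≤ Y → Y ≤ N →
      IsSimpleModule Λ (↥Y ⧸ (X.comap Y.subtype)) →
      Nonempty ((↥Y ⧸ (X.comap Y.subtype)) ≃ₗ[Λ] S))
    (W : Submodule k M) (hWN : W ≤ N.restrictScalars k)
    (hdisj : Disjoint (L.restrictScalars k) W)
    (hsum : L.restrictScalars k ⊔ W = N.restrictScalars k) :
    -- `f` is "right multiplication by `e`" (the `k`-linear action of `e` on `M`):
    ∀ f : M →ₗ[k] M, (∀ m : M, f m = e • m) →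
      -- `W ⊕ Le` maps isomorphically onto `Me`:
      Disjoint W ((L.restrictScalars k).map f) ∧
      Disjoint (W ⊔ (L.restrictScalars k).map f) (LinearMap.ker f) ∧
      (W ⊔ (L.restrictScalars k).map f).map f = (⊤ : Submodule k M).map f ∧
      -- and `Me = We ⊕ Le`:
      (⊤ : Submodule k M).map f = W.map f ⊔ (L.restrictScalars k).map f ∧
      Disjoint (W.map f) ((L.restrictScalars k).map f) :=
  stmt0_general k Λ M S e he heS heS' L N hMN hNL W hdisj hsum
end

section
/- Let p be an odd prime and H^*(E) the F_p-algebra generated by y1, y2, C, v subject to y1^p y2 = y1 y2^p, Cy_i = y_i^p, C^2 = y1^{2p-2} + y2^{2p-2} - y1^{p-1}y2^{p-1}. Then the F_p-span of all elements (λ1 y1 + λ2 y2)^n with n > 0 and λ1, λ2 ∈ F_p equals F_p[C]·(S^1 ⊕ S^2 ⊕ ... ⊕ S^{p-1}), where S^i is the image in H^*(E) of the homogeneous degree-i polynomials in y1, y2. -/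
open Finset in
private lemma stmt4_expand (p : ℕ) (R : Type) [CommRing R] [Algebra (ZMod p) R]
    (y1 y2 : R) (l1 l2 : ZMod p) (n : ℕ) :
    (l1 • y1 + l2 • y2) ^ n =
      ∑ k ∈ range (n+1), ((n.choose k : ZMod p) * l1 ^ k * l2 ^ (n-k)) • (y1 ^ k * y2 ^ (n-k)) := by
  simp only [Algebra.smul_def, map_mul, map_pow, map_natCast]
  rw [add_pow]
  refine Finset.sum_congr rfl fun k _ => ?_
  ring

private lemma stmt4_frob (p : ℕ) (hp : p.Prime) (R : Type) [CommRing R] [Algebra (ZMod p) R]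
    [CharP R p] (y1 y2 C : R) (hC1 : C * y1 = y1 ^ p) (hC2 : C * y2 = y2 ^ p)
    (l1 l2 : ZMod p) (n : ℕ) (hn : 1 ≤ n) :
    (l1 • y1 + l2 • y2) ^ (n + (p - 1)) = C * (l1 • y1 + l2 • y2) ^ n := by
  haveI : Fact p.Prime := ⟨hp⟩
  have hℓp : (l1 • y1 + l2 • y2) ^ p = C * (l1 • y1 + l2 • y2) := by
    rw [add_pow_char, smul_pow, smul_pow, ZMod.pow_card, ZMod.pow_card, ← hC1, ← hC2,
      mul_add, mul_smul_comm, mul_smul_comm]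
  have h : n + (p - 1) = p + (n - 1) := by have := hp.two_le; omega
  have hn' : n = (n - 1) + 1 := by omega
  rw [h, pow_add, hℓp, mul_assoc, ← pow_succ', ← hn']

private lemma stmt4_frobM (p : ℕ) (hp : p.Prime) (R : Type) [CommRing R] [Algebra (ZMod p) R]
    [CharP R p] (y1 y2 C : R) (hC1 : C * y1 = y1 ^ p) (hC2 : C * y2 = y2 ^ p)
    (l1 l2 : ZMod p) (n : ℕ) (hn : 1 ≤ n) (m : ℕ) :
    (l1 • y1 + l2 • y2) ^ (n + m * (p - 1)) = C ^ m * (l1 • y1 + l2 • y2) ^ n := by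
  induction m with
  | zero => simp
  | succ m ih =>
    have h : n + (m + 1) * (p - 1) = (n + m * (p - 1)) + (p - 1) := by ring
    rw [h, stmt4_frob p hp R y1 y2 C hC1 hC2 l1 l2 _ (by omega), ih, ← mul_assoc, ← pow_succ']

private lemma stmt4_det (p : ℕ) (hp : p.Prime) (n : ℕ) (hn : n + 1 ≤ p) :
    IsUnit (Matrix.det (Matrix.of fun t j : Fin (n+1) =>
      (n.choose (j:ℕ) : ZMod p) * ((t:ℕ) : ZMod p) ^ (j:ℕ))) := by
  haveI : Fact p.Prime := ⟨hp⟩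
  have hM : (Matrix.of fun t j : Fin (n+1) =>
      (n.choose (j:ℕ) : ZMod p) * ((t:ℕ) : ZMod p) ^ (j:ℕ)) =
      (Matrix.vandermonde fun t : Fin (n+1) => ((t:ℕ) : ZMod p)) *
        Matrix.diagonal (fun j : Fin (n+1) => (n.choose (j:ℕ) : ZMod p)) := by
    ext t j
    rw [Matrix.mul_diagonal]
    simp [Matrix.vandermonde, mul_comm]
  rw [hM, Matrix.det_mul, Matrix.det_vandermonde, Matrix.det_diagonal]
  have hcast : ∀ i : Fin (n+1), ∀ j : Fin (n+1), ((i:ℕ):ZMod p) = ((j:ℕ):ZMod p) → i = j := by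
    intro i j hij
    have hi := ZMod.val_cast_of_lt (show (i:ℕ) < p by omega)
    have hj := ZMod.val_cast_of_lt (show (j:ℕ) < p by omega)
    rw [hij, hj] at hi
    exact Fin.ext hi.symm
  apply IsUnit.mul
  · apply isUnit_iff_ne_zero.mpr
    apply Finset.prod_ne_zero_iff.mpr
    intro i _
    apply Finset.prod_ne_zero_iff.mpr
    intro j hj
    have hne : i ≠ j := by
      simp only [Finset.mem_Ioi] at hj
      exact ne_of_lt hj
    exact sub_ne_zero.mpr fun h => hne (hcast i j h.symm)
  · apply isUnit_iff_ne_zero.mpr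
    apply Finset.prod_ne_zero_iff.mpr
    intro j _
    rw [Ne, ZMod.natCast_eq_zero_iff]
    intro hdvd
    have hjn : (j:ℕ) ≤ n := by omega
    have := Nat.choose_mul_factorial_mul_factorial hjn
    have hpn : p ∣ n.factorial := by
      rw [← this]
      exact dvd_mul_of_dvd_left (dvd_mul_of_dvd_left hdvd _) _
    have := (Nat.Prime.dvd_factorial hp).mp hpn
    omega

/-- In `H^*(E)`, the `F_p`-span of all elements `(λ1 y1 + λ2 y2)^n` with
`n > 0`, `λ1, λ2 ∈ F_p`, equals `F_p[C]·(S^1 ⊕ ⋯ ⊕ S^{p-1})`, i.e. the span of the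
elements `C^m y1^a y2^b` with `1 ≤ a + b ≤ p - 1`. -/
theorem stmt4 (p : ℕ) (hp : p.Prime) (hodd : Odd p)
    (R : Type) [CommRing R] [Algebra (ZMod p) R] [CharP R p]
    (y1 y2 C v : R)
    (h1 : y1 ^ p * y2 = y1 * y2 ^ p)
    (hC1 : C * y1 = y1 ^ p) (hC2 : C * y2 = y2 ^ p)
    (hCsq : C ^ 2 = y1 ^ (2 * p - 2) + y2 ^ (2 * p - 2) - y1 ^ (p - 1) * y2 ^ (p - 1)) :
    Submodule.span (ZMod p)
        {x : R | ∃ n : ℕ, 0 < n ∧ ∃ a b : ZMod p, x = (a • y1 + b • y2) ^ n} =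
      Submodule.span (ZMod p)
        {x : R | ∃ m a b : ℕ, 1 ≤ a + b ∧ a + b ≤ p - 1 ∧ x = C ^ m * (y1 ^ a * y2 ^ b)} := by
  haveI : Fact p.Prime := ⟨hp⟩
  have hp2 := hp.two_le
  apply le_antisymm
  · rw [Submodule.span_le]
    rintro x ⟨n, hn, l1, l2, rfl⟩
    have hmod : (n-1) % (p-1) < p - 1 := Nat.mod_lt _ (by omega)
    have hnr : n = ((n-1) % (p-1) + 1) + ((n-1)/(p-1)) * (p-1) := by
      have := Nat.mod_add_div' (n-1) (p-1)
      omega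
    rw [hnr, stmt4_frobM p hp R y1 y2 C hC1 hC2 l1 l2 _ (by omega),
      stmt4_expand, Finset.mul_sum]
    apply Submodule.sum_mem
    intro k hk
    rw [mul_smul_comm]
    apply Submodule.smul_mem
    apply Submodule.subset_span
    have hk' : k < (n-1) % (p-1) + 1 + 1 := Finset.mem_range.mp hk
    exact ⟨(n-1)/(p-1), k, (n-1) % (p-1) + 1 - k, by omega, by omega, rfl⟩
  · rw [Submodule.span_le]
    rintro x ⟨m, a, b, hab1, hab2, rfl⟩
    set n := a + b with hndef
    set M : Matrix (Fin (n+1)) (Fin (n+1)) (ZMod p) :=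
      Matrix.of fun t j => (n.choose (j:ℕ) : ZMod p) * ((t:ℕ) : ZMod p) ^ (j:ℕ) with hMdef
    have hNM : M⁻¹ * M = 1 := Matrix.nonsing_inv_mul M (stmt4_det p hp n (by omega))
    have hexp : ∀ t : Fin (n+1), ((((t:ℕ):ZMod p)) • y1 + (1:ZMod p) • y2) ^ n =
        ∑ j : Fin (n+1), M t j • (y1 ^ (j:ℕ) * y2 ^ (n - (j:ℕ))) := by
      intro t
      rw [stmt4_expand, ← Fin.sum_univ_eq_sum_range]
      refine Finset.sum_congr rfl fun j _ => ?_
      simp [hMdef]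
    have key : ∀ j : Fin (n+1),
        (∑ t : Fin (n+1), (M⁻¹ j t) •
          ((((t:ℕ):ZMod p)) • y1 + (1:ZMod p) • y2) ^ (n + m * (p - 1))) =
        C ^ m * (y1 ^ (j:ℕ) * y2 ^ (n - (j:ℕ))) := by
      intro j
      have hfr : ∀ t : Fin (n+1), ((((t:ℕ):ZMod p)) • y1 + (1:ZMod p) • y2) ^ (n + m * (p-1)) =
          C ^ m * ((((t:ℕ):ZMod p)) • y1 + (1:ZMod p) • y2) ^ n :=
        fun t => stmt4_frobM p hp R y1 y2 C hC1 hC2 _ _ n (by omega) m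
      simp only [hfr, hexp, Finset.mul_sum, mul_smul_comm, Finset.smul_sum, smul_smul]
      rw [Finset.sum_comm]
      simp only [← Finset.sum_smul]
      have h1' : ∀ k : Fin (n+1), (∑ t, M⁻¹ j t * M t k) = (1 : Matrix (Fin (n+1)) (Fin (n+1)) (ZMod p)) j k := by
        intro k
        rw [← Matrix.mul_apply, hNM]
      simp only [h1', Matrix.one_apply]
      rw [Finset.sum_eq_single j]
      · simp
      · intro k _ hkj
        simp [Ne.symm hkj]
      · intro h
        exact absurd (Finset.mem_univ j) h
    have hb : b = n - a := by omega
    have ha : a < n + 1 := by omega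
    have hkey := key ⟨a, ha⟩
    simp only at hkey
    rw [hb, ← hkey]
    apply Submodule.sum_mem
    intro t _
    apply Submodule.smul_mem
    apply Submodule.subset_span
    exact ⟨n + m * (p - 1), by omega, ((t:ℕ):ZMod p), 1, rfl⟩
end

section
/- Let p be an odd prime, A = (Z/p)^2 elementary abelian of rank 2 with mod-p cohomology polynomial part H = F_p[y,u], and d_2 = y u^p - y^p u. Set D̃_1 = y^{p(p-1)} + (u^p - y^{p-1}u)^{p-1} and D̃_2 = d_2^{p-1} (the Dickson invariants). Then for 0 ≤ l ≤ p-2 and j ≥ 0: D̃_1 · y^{(j+1)(p-1)-l} u^l ≡ y^{(p+j+1)(p-1)-l} u^l (mod d_2 F_p[y,u]), and D̃_1 · u^{(j+1)(p-1)} ≡ u^{(p+j+1)(p-1)} (mod d_2 F_p[y,u]). -/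
/-!
With `a = u^(p-1)`, `b = y^(p-1)` and `c = a - b` one has `d₂ = y u c` and
`D̃₁ = b^p + a c^(p-1)`. The first congruence is then immediate: `D̃₁ - y^(p(p-1)) = u^(p-1) c^(p-1)`,
and the extra factor `y^m` with `m ≥ 1` supplies the missing `y`. For the second,
`D̃₁ - a^p = b c^(p-1) - ((b + c)^p - b^p - c^p)`, and `b c` divides `(b + c)^p - b^p - c^p`;
since `y ∣ b`, the product `y c` divides `D̃₁ - a^p`, and the factor `u^m` supplies the `u`.
-/

open MvPolynomial

theorem mul_dvd_add_pow_sub_pow_sub_pow {R : Type*} [CommRing R] (a b : R) {k : ℕ} (hk : 1 ≤ k) :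
    a * b ∣ (a + b) ^ k - a ^ k - b ^ k := by
  induction k, hk using Nat.le_induction with
  | base => simp
  | succ k hk ih =>
    have hstep : (a + b) ^ (k + 1) - a ^ (k + 1) - b ^ (k + 1) =
        (a + b) * ((a + b) ^ k - a ^ k - b ^ k) + (a * b ^ k + a ^ k * b) := by ring
    rw [hstep]
    exact dvd_add (dvd_mul_of_dvd_right ih _)
      (dvd_add (mul_dvd_mul_left a (dvd_pow_self b (by omega)))
        (mul_dvd_mul_right (dvd_pow_self a (by omega)) b))

namespace DicksonRankTwo

variable {R : Type*} [CommRing R]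

/-- `y u^q - y^q u` with `q = n + 1`; for `q = p` this is `d₂`. -/
def d₂ (n : ℕ) (y u : R) : R := y * u ^ (n + 1) - y ^ (n + 1) * u

/-- `y^(q(q-1)) + (u^q - y^(q-1) u)^(q-1)` with `q = n + 1`; for `q = p` this is `D̃₁`. -/
def D₁ (n : ℕ) (y u : R) : R := y ^ ((n + 1) * n) + (u ^ (n + 1) - y ^ n * u) ^ n

theorem d₂_eq (n : ℕ) (y u : R) : d₂ n y u = y * u * (u ^ n - y ^ n) := by
  rw [d₂]
  ring

theorem D₁_eq (n : ℕ) (y u : R) : D₁ n y u = (y ^ n) ^ (n + 1) + u ^ n * (u ^ n - y ^ n) ^ n := by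
  rw [D₁, pow_mul', show u ^ (n + 1) - y ^ n * u = u * (u ^ n - y ^ n) by ring, mul_pow]

theorem d₂_dvd_D₁_mul_pow_mul_pow_sub {n m : ℕ} (hn : 0 < n) (hm : 0 < m) (l : ℕ) (y u : R) :
    d₂ n y u ∣ D₁ n y u * (y ^ m * u ^ l) - y ^ ((n + 1) * n + m) * u ^ l := by
  have hdiff : D₁ n y u * (y ^ m * u ^ l) - y ^ ((n + 1) * n + m) * u ^ l =
      y ^ m * u ^ n * (u ^ n - y ^ n) ^ n * u ^ l := by
    rw [D₁_eq]
    ring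
  rw [d₂_eq, hdiff]
  exact dvd_mul_of_dvd_left (mul_dvd_mul (mul_dvd_mul (dvd_pow_self y hm.ne')
    (dvd_pow_self u hn.ne')) (dvd_pow_self _ hn.ne')) _

theorem d₂_dvd_D₁_mul_pow_sub {n m : ℕ} (hn : 0 < n) (hm : 0 < m) (y u : R) :
    d₂ n y u ∣ D₁ n y u * u ^ m - u ^ ((n + 1) * n + m) := by
  set b := y ^ n
  set c := u ^ n - b
  have hdiff : D₁ n y u * u ^ m - u ^ ((n + 1) * n + m) =
      (b * c ^ n - ((b + c) ^ (n + 1) - b ^ (n + 1) - c ^ (n + 1))) * u ^ m := by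
    rw [D₁_eq, show u ^ n = b + c by ring]
    ring
  have hbc : y * c ∣ b * c ^ n - ((b + c) ^ (n + 1) - b ^ (n + 1) - c ^ (n + 1)) :=
    (mul_dvd_mul_right (dvd_pow_self y hn.ne') c).trans
      (dvd_sub (mul_dvd_mul_left b (dvd_pow_self c hn.ne')) (mul_dvd_add_pow_sub_pow_sub_pow b c (Nat.le_add_left 1 n)))
  rw [d₂_eq, hdiff, mul_right_comm]
  exact mul_dvd_mul hbc (dvd_pow_self u hm.ne')

end DicksonRankTwo

theorem stmt8_general (p : ℕ) (hp : p.Prime) (l j : ℕ) (hl : l ≤ p - 2) :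
    (((X 0 : MvPolynomial (Fin 2) (ZMod p)) ^ (p * (p - 1)) +
          ((X 1) ^ p - (X 0) ^ (p - 1) * X 1) ^ (p - 1)) *
        ((X 0) ^ ((j + 1) * (p - 1) - l) * (X 1) ^ l) -
        (X 0) ^ ((p + j + 1) * (p - 1) - l) * (X 1) ^ l ∈
      Ideal.span {(X 0 : MvPolynomial (Fin 2) (ZMod p)) * (X 1) ^ p - (X 0) ^ p * X 1}) ∧
    (((X 0 : MvPolynomial (Fin 2) (ZMod p)) ^ (p * (p - 1)) +
          ((X 1) ^ p - (X 0) ^ (p - 1) * X 1) ^ (p - 1)) *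
        (X 1) ^ ((j + 1) * (p - 1)) -
        (X 1) ^ ((p + j + 1) * (p - 1)) ∈
      Ideal.span {(X 0 : MvPolynomial (Fin 2) (ZMod p)) * (X 1) ^ p - (X 0) ^ p * X 1}) := by
  obtain ⟨n, rfl⟩ : ∃ n, p = n + 1 := ⟨p - 1, by have := hp.two_le; omega⟩
  have hn : 0 < n := by have := hp.two_le; omega
  have hm : 0 < (j + 1) * n := by positivity
  have hlm : l < (j + 1) * n := by
    have := Nat.le_mul_of_pos_left n (show 0 < j + 1 by omega)
    omega
  have hexp : (n + 1 + j + 1) * n = (n + 1) * n + (j + 1) * n := by ring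
  simp only [Nat.add_sub_cancel, Ideal.mem_span_singleton]
  refine ⟨?_, ?_⟩
  · rw [hexp, Nat.add_sub_assoc hlm.le]
    exact DicksonRankTwo.d₂_dvd_D₁_mul_pow_mul_pow_sub hn (Nat.sub_pos_of_lt hlm) l _ _
  · rw [hexp]
    exact DicksonRankTwo.d₂_dvd_D₁_mul_pow_sub hn hm _ _

/-- In `F_p[y,u]` (here `y = X 0`, `u = X 1`) with `d₂ = y u^p - y^p u`,
`D̃₁ = y^{p(p-1)} + (u^p - y^{p-1}u)^{p-1}`, for `0 ≤ l ≤ p-2` and `j ≥ 0`: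
`D̃₁ · y^{(j+1)(p-1)-l} u^l ≡ y^{(p+j+1)(p-1)-l} u^l` and
`D̃₁ · u^{(j+1)(p-1)} ≡ u^{(p+j+1)(p-1)}`, both mod `d₂ F_p[y,u]`. -/
theorem stmt8 (p : ℕ) (hp : p.Prime) (hodd : Odd p) (l j : ℕ) (hl : l ≤ p - 2) :
    (((X 0 : MvPolynomial (Fin 2) (ZMod p)) ^ (p * (p - 1)) +
          ((X 1) ^ p - (X 0) ^ (p - 1) * X 1) ^ (p - 1)) *
        ((X 0) ^ ((j + 1) * (p - 1) - l) * (X 1) ^ l) -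
        (X 0) ^ ((p + j + 1) * (p - 1) - l) * (X 1) ^ l ∈
      Ideal.span {(X 0 : MvPolynomial (Fin 2) (ZMod p)) * (X 1) ^ p - (X 0) ^ p * X 1}) ∧
    (((X 0 : MvPolynomial (Fin 2) (ZMod p)) ^ (p * (p - 1)) +
          ((X 1) ^ p - (X 0) ^ (p - 1) * X 1) ^ (p - 1)) *
        (X 1) ^ ((j + 1) * (p - 1)) -
        (X 1) ^ ((p + j + 1) * (p - 1)) ∈
      Ideal.span {(X 0 : MvPolynomial (Fin 2) (ZMod p)) * (X 1) ^ p - (X 0) ^ p * X 1}) :=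
  stmt8_general p hp l j hl
end

section
/- Let p be an odd prime. In H^*(E), the p+1 elements ŷ_A^m · Tr_A^E(u^{p-1}), as A ranges over the p+1 maximal elementary abelian subgroups of E (where ŷ_{A_i} = y_1 for i ∈ F_p and ŷ_{A_∞} = y_2), form a basis of the (p+1)-dimensional F_p-vector space M_m = C·S^m + T^m, for each 0 ≤ m ≤ p-2 (with S^0 = F_p, T^0 = S^{p-1}). -/
/-!
Restricted to the maximal elementary abelian subgroup `A`, the element `ŷ_A^m · Tr_A(u^{p-1})`
becomes `-x^{m+p-1}`, and it restricts to `0` on every other maximal elementary abelian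
subgroup; so these `p + 1` elements are linearly independent. Since `H^*(E)` is detected on
these subgroups, `Tr_A(u^{p-1})` equals `(i y₁ - y₂)^{p-1} - C` (resp. `y₁^{p-1} - C`).
Expanding binomially and using `C y₁ = y₁^p`, each of the `p + 1` elements lies in
`M_m = C·S^m + T^m`. That space is spanned by `(m + 1) + (p - m)` monomials, so the two spaces
are equal by counting dimensions.
-/

open MvPolynomial Submodule

theorem linearIndependent_of_apply_eq_ite {K M N ι : Type*} [Ring K] [IsDomain K]
    [AddCommGroup M] [Module K M] [AddCommGroup N] [Module K N] [Module.IsTorsionFree K N]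
    [DecidableEq ι] {f : ι → M} (r : ι → M →ₗ[K] N) {c : N} (hc : c ≠ 0)
    (h : ∀ b a, r b (f a) = if b = a then c else 0) : LinearIndependent K f := by
  have hsingle : LinearMap.pi r ∘ f = fun a => Pi.single a c := by
    ext a b
    simp [h, Pi.single_apply]
  refine LinearIndependent.of_comp (LinearMap.pi r) ?_
  rw [hsingle]
  exact Pi.linearIndependent_single_of_ne_zero fun _ => hc

theorem ZMod.pow_card_sub_one_sub_one {p : ℕ} [Fact p.Prime] (x : ZMod p) :
    x ^ (p - 1) - 1 = if x = 0 then -1 else 0 := by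
  split_ifs with hx
  · rw [hx, zero_pow (by have := (Fact.out : p.Prime).two_le; omega), zero_sub]
  · rw [ZMod.pow_card_sub_one_eq_one hx, sub_self]

namespace ExtraspecialCohomology

variable {p : ℕ} {R : Type*} [CommRing R] [Algebra (ZMod p) R]

section Subspaces

variable (p) (y1 y2 C : R) (m : ℕ)

def S : Submodule (ZMod p) R :=
  span (ZMod p) {x : R | ∃ a b : ℕ, a + b = m ∧ x = y1 ^ a * y2 ^ b}

def T : Submodule (ZMod p) R :=
  span (ZMod p) {x : R | ∃ l : ℕ, l ≤ p - 1 - m ∧ x = y1 ^ (p - 1 - l) * y2 ^ (m + l)}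

def M : Submodule (ZMod p) R :=
  (S p y1 y2 m).map (LinearMap.mulLeft (ZMod p) C) ⊔ T p y1 y2 m

variable {p y1 y2 C m}

theorem mulLeft_mem_M {a b : ℕ} (hab : a + b = m) : C * (y1 ^ a * y2 ^ b) ∈ M p y1 y2 C m :=
  mem_sup_left (mem_map_of_mem (subset_span ⟨a, b, hab, rfl⟩))

theorem pow_mul_pow_mem_M [NeZero p] (hC1 : C * y1 = y1 ^ p) {a b : ℕ}
    (hab : a + b = m + (p - 1)) (ha : m ≤ a) : y1 ^ a * y2 ^ b ∈ M p y1 y2 C m := by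
  -- For `a < p` it lies in `T^m`; otherwise `C y₁ = y₁^p` moves it into `C·S^m`.
  by_cases hap : a ≤ p - 1
  · refine mem_sup_right (subset_span ⟨p - 1 - a, by omega, ?_⟩)
    rw [Nat.sub_sub_self hap, show m + (p - 1 - a) = b by omega]
  · have hp := NeZero.pos p
    obtain ⟨c, rfl⟩ : ∃ c, a = p + c := ⟨a - p, by omega⟩
    have hC : C * (y1 ^ (c + 1) * y2 ^ b) = y1 ^ (p + c) * y2 ^ b := by
      rw [pow_succ, pow_add, ← hC1]; ring
    exact hC ▸ mulLeft_mem_M (by omega)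

variable (p y1 y2 C m) in
def spanningFamily : Fin (m + 1) ⊕ Fin (p - m) → R :=
  Sum.elim (fun a => C * (y1 ^ (a : ℕ) * y2 ^ (m - a))) (fun l => y1 ^ (p - 1 - l) * y2 ^ (m + l))

theorem M_le_span_range (hm : m < p) :
    M p y1 y2 C m ≤ span (ZMod p) (Set.range (spanningFamily p y1 y2 C m)) := by
  rw [spanningFamily, Set.Sum.elim_range, span_union, M, S, T, map_span]
  refine sup_le_sup (span_mono ?_) (span_mono ?_)
  · rintro _ ⟨_, ⟨a, b, hab, rfl⟩, rfl⟩
    exact ⟨⟨a, by omega⟩, by simp [show m - a = b by omega]⟩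
  · rintro _ ⟨l, hl, rfl⟩
    exact ⟨⟨l, by omega⟩, rfl⟩

theorem finiteDimensional_M [Fact p.Prime] (hm : m < p) :
    FiniteDimensional (ZMod p) (M p y1 y2 C m) :=
  have := FiniteDimensional.span_of_finite (ZMod p)
    (Set.finite_range (spanningFamily p y1 y2 C m))
  Submodule.finiteDimensional_of_le (M_le_span_range hm)

theorem finrank_M_le [Fact p.Prime] (hm : m < p) :
    Module.finrank (ZMod p) (M p y1 y2 C m) ≤ p + 1 := by
  have := FiniteDimensional.span_of_finite (ZMod p)
    (Set.finite_range (spanningFamily p y1 y2 C m))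
  calc Module.finrank (ZMod p) (M p y1 y2 C m)
      ≤ Fintype.card (Fin (m + 1) ⊕ Fin (p - m)) :=
        (finrank_mono (M_le_span_range hm)).trans (finrank_range_le_card _)
    _ = p + 1 := by simp; omega

end Subspaces

variable (y1 y2 C : R)

-- `none` indexes `A_∞` and `some i` indexes `A_i`.
def yHat : Option (ZMod p) → R
  | none => y2
  | some _ => y1

def trFormula : Option (ZMod p) → R
  | none => y1 ^ (p - 1) - C
  | some i => (i • y1 - y2) ^ (p - 1) - C

variable {y1 y2 C}

theorem yHat_pow_mul_trFormula_mem_M [NeZero p] (hC1 : C * y1 = y1 ^ p) {m : ℕ}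
    (hm : m ≤ p - 1) :
    ∀ a : Option (ZMod p), yHat y1 y2 a ^ m * trFormula y1 y2 C a ∈ M p y1 y2 C m
  | none => by
    have h : y2 ^ m * (y1 ^ (p - 1) - C) = y1 ^ (p - 1) * y2 ^ m - C * (y1 ^ 0 * y2 ^ m) := by
      ring
    exact h ▸ sub_mem (pow_mul_pow_mem_M hC1 (by omega) hm) (mulLeft_mem_M (by omega))
  | some i => by
    have h : y1 ^ m * ((i • y1 - y2) ^ (p - 1) - C) =
        y1 ^ m * (i • y1 + (-1 : ZMod p) • y2) ^ (p - 1) - C * (y1 ^ m * y2 ^ 0) := by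
      simp only [neg_one_smul, ← sub_eq_add_neg]; ring
    refine h ▸ sub_mem ?_ (mulLeft_mem_M (by omega))
    rw [add_pow, Finset.mul_sum]
    refine sum_mem fun k hk => ?_
    have hk : k ≤ p - 1 := Nat.lt_succ_iff.mp (Finset.mem_range.mp hk)
    have hterm : y1 ^ m *
        ((i • y1) ^ k * ((-1 : ZMod p) • y2) ^ (p - 1 - k) * ((p - 1).choose k : R)) =
        (i ^ k * (-1) ^ (p - 1 - k) * ((p - 1).choose k : ZMod p)) •
          (y1 ^ (m + k) * y2 ^ (p - 1 - k)) := by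
      simp only [Algebra.smul_def, map_mul, map_pow, map_natCast]
      ring
    exact hterm ▸ smul_mem _ _ (pow_mul_pow_mem_M hC1 (by omega) (by omega))

section Restriction

variable {P : Type*} [CommRing P] [Algebra (ZMod p) P]
  (res : Option (ZMod p) → R →ₐ[ZMod p] P) {x : P}

theorem res_trFormula [Fact p.Prime] (hodd : Odd p) (hry1 : ∀ i, res (some i) y1 = x)
    (hry1' : res none y1 = 0) (hry2 : ∀ i, res (some i) y2 = i • x) (hry2' : res none y2 = x)
    (hrC : ∀ a, res a C = x ^ (p - 1)) (b a : Option (ZMod p)) :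
    res b (trFormula y1 y2 C a) = if b = a then -x ^ (p - 1) else 0 := by
  have hp := (Fact.out : p.Prime).two_le
  cases a with
  | none => cases b with
    | none => simp [trFormula, hry1', hrC, zero_pow (show p - 1 ≠ 0 by omega)]
    | some j => simp [trFormula, hry1, hrC]
  | some i => cases b with
    | none =>
      simp [trFormula, hry1', hry2', hrC, (Nat.Odd.sub_odd hodd odd_one).neg_pow]
    | some j =>
      have h : res (some j) (trFormula y1 y2 C (some i)) =
          ((i - j) ^ (p - 1) - 1) • x ^ (p - 1) := by
        simp only [trFormula, map_sub, map_pow, map_smul, hry1, hry2, hrC]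
        rw [← sub_smul, smul_pow, sub_smul, one_smul]
      rw [h, ZMod.pow_card_sub_one_sub_one]
      by_cases hij : j = i
      · simp [hij]
      · simp [hij, sub_eq_zero, Ne.symm hij]

theorem res_yHat_self (hry1 : ∀ i, res (some i) y1 = x) (hry2' : res none y2 = x) :
    ∀ a, res a (yHat y1 y2 a) = x
  | none => hry2'
  | some i => hry1 i

theorem res_yHat_pow_mul (hry1 : ∀ i, res (some i) y1 = x) (hry2' : res none y2 = x)
    {t : Option (ZMod p) → R} (ht : ∀ b a, res b (t a) = if b = a then -x ^ (p - 1) else 0)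
    (m : ℕ) (b a : Option (ZMod p)) :
    res b (yHat y1 y2 a ^ m * t a) = if b = a then -x ^ (m + (p - 1)) else 0 := by
  rw [map_mul, ht]
  split_ifs with h
  · rw [h, map_pow, res_yHat_self res hry1 hry2', pow_add]; ring
  · rw [mul_zero]

theorem linearIndependent_and_span_eq_M [Fact p.Prime] (hodd : Odd p) (hC1 : C * y1 = y1 ^ p)
    (hry1 : ∀ i, res (some i) y1 = x) (hry1' : res none y1 = 0)
    (hry2 : ∀ i, res (some i) y2 = i • x) (hry2' : res none y2 = x)
    (hrC : ∀ a, res a C = x ^ (p - 1)) (hx : ¬IsNilpotent x) {t : Option (ZMod p) → R}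
    (ht : ∀ b a, res b (t a) = if b = a then -x ^ (p - 1) else 0)
    (hdetect : ∀ z : R, (∀ b, res b z = 0) → z = 0) {m : ℕ} (hm : m < p) :
    LinearIndependent (ZMod p) (fun a => yHat y1 y2 a ^ m * t a) ∧
      span (ZMod p) (Set.range fun a => yHat y1 y2 a ^ m * t a) = M p y1 y2 C m := by
  have ht_eq (a) : t a = trFormula y1 y2 C a :=
    sub_eq_zero.1 <| hdetect _ fun b => by
      rw [map_sub, ht, res_trFormula res hodd hry1 hry1' hry2 hry2' hrC, sub_self]
  have hli : LinearIndependent (ZMod p) fun a => yHat y1 y2 a ^ m * t a :=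
    linearIndependent_of_apply_eq_ite (fun b => (res b).toLinearMap)
      (neg_ne_zero.2 fun h => hx ⟨_, h⟩) (res_yHat_pow_mul res hry1 hry2' ht m)
  have := finiteDimensional_M (y1 := y1) (y2 := y2) (C := C) hm
  refine ⟨hli, eq_of_le_of_finrank_le ?_ ?_⟩
  · rw [span_le, Set.range_subset_iff]
    intro a
    rw [ht_eq]
    exact yHat_pow_mul_trFormula_mem_M hC1 (by omega) a
  · rw [finrank_span_eq_card hli, Fintype.card_option, ZMod.card]
    exact finrank_M_le hm

end Restriction

end ExtraspecialCohomology

theorem stmt13_general (p : ℕ) (hp : p.Prime) (hodd : Odd p)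
    (R : Type) [CommRing R] [Algebra (ZMod p) R]
    (y1 y2 C : R)
    (hC1 : C * y1 = y1 ^ p)
    (res : Option (ZMod p) → (R →ₐ[ZMod p] MvPolynomial (Fin 2) (ZMod p)))
    (hry1 : ∀ i : ZMod p, res (some i) y1 = X 0) (hry1' : res none y1 = 0)
    (hry2 : ∀ i : ZMod p, res (some i) y2 = i • X 0) (hry2' : res none y2 = X 0)
    (hrC : ∀ a, res a C = (X 0) ^ (p - 1))
    (Tr : Option (ZMod p) → (MvPolynomial (Fin 2) (ZMod p) →ₗ[ZMod p] R))
    (hdc : ∀ a b, res a (Tr b ((X 1) ^ (p - 1))) =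
      if a = b then -(X 0) ^ (p - 1) else 0)
    (hquillen : ∀ x : R, (∀ a, res a x = 0) → x = 0)
    (m : ℕ) (hm : m ≤ p - 2) :
    LinearIndependent (ZMod p)
      (fun a : Option (ZMod p) =>
        a.elim (y2 ^ m * Tr none ((X 1) ^ (p - 1)))
          (fun i => y1 ^ m * Tr (some i) ((X 1) ^ (p - 1)))) ∧
    Submodule.span (ZMod p)
        (Set.range (fun a : Option (ZMod p) =>
          a.elim (y2 ^ m * Tr none ((X 1) ^ (p - 1)))
            (fun i => y1 ^ m * Tr (some i) ((X 1) ^ (p - 1))))) =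
      (Submodule.span (ZMod p)
          {x : R | ∃ a b : ℕ, a + b = m ∧ x = y1 ^ a * y2 ^ b}).map
        (LinearMap.mulLeft (ZMod p) C) ⊔
      Submodule.span (ZMod p)
        {x : R | ∃ l : ℕ, l ≤ p - 1 - m ∧ x = y1 ^ (p - 1 - l) * y2 ^ (m + l)} := by
  have := Fact.mk hp
  have hfamily : (fun a : Option (ZMod p) => a.elim (y2 ^ m * Tr none (X 1 ^ (p - 1)))
      fun i => y1 ^ m * Tr (some i) (X 1 ^ (p - 1))) =
      fun a => ExtraspecialCohomology.yHat y1 y2 a ^ m * Tr a (X 1 ^ (p - 1)) := by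
    funext a; cases a <;> rfl
  rw [hfamily]
  exact ExtraspecialCohomology.linearIndependent_and_span_eq_M res hodd hC1 hry1 hry1' hry2
    hry2' hrC (isNilpotent_iff_eq_zero.not.2 (X_ne_zero 0)) hdc hquillen
    (by have := hp.two_le; omega)

/-- Same transfer setup for `E = p₊^{1+2}`. For each `0 ≤ m ≤ p-2`, the
`p+1` elements `ŷ_A^m · Tr_A(u^{p-1})` — where `ŷ_{A_i} = y₁` for `i ∈ F_p` and
`ŷ_{A_∞} = y₂` — are linearly independent over `F_p` and span the `(p+1)`-dimensional
subspace `M_m = C·S^m + T^m` (with `S^0 = F_p`, `T^0 = S^{p-1}`). -/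
theorem stmt13 (p : ℕ) (hp : p.Prime) (hodd : Odd p)
    (R : Type) [CommRing R] [Algebra (ZMod p) R]
    (y1 y2 C v : R)
    (h1 : y1 ^ p * y2 = y1 * y2 ^ p)
    (hC1 : C * y1 = y1 ^ p) (hC2 : C * y2 = y2 ^ p)
    (hCsq : C ^ 2 = y1 ^ (2 * p - 2) + y2 ^ (2 * p - 2) - y1 ^ (p - 1) * y2 ^ (p - 1))
    (res : Option (ZMod p) → (R →ₐ[ZMod p] MvPolynomial (Fin 2) (ZMod p)))
    (hry1 : ∀ i : ZMod p, res (some i) y1 = X 0) (hry1' : res none y1 = 0)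
    (hry2 : ∀ i : ZMod p, res (some i) y2 = i • X 0) (hry2' : res none y2 = X 0)
    (hrC : ∀ a, res a C = (X 0) ^ (p - 1))
    (hrv : ∀ a, res a v = (X 1) ^ p - (X 0) ^ (p - 1) * X 1)
    (Tr : Option (ZMod p) → (MvPolynomial (Fin 2) (ZMod p) →ₗ[ZMod p] R))
    (hdc : ∀ a b, res a (Tr b ((X 1) ^ (p - 1))) =
      if a = b then -(X 0) ^ (p - 1) else 0)
    (hquillen : ∀ x : R, (∀ a, res a x = 0) → x = 0)
    (m : ℕ) (hm : m ≤ p - 2) :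
    LinearIndependent (ZMod p)
      (fun a : Option (ZMod p) =>
        a.elim (y2 ^ m * Tr none ((X 1) ^ (p - 1)))
          (fun i => y1 ^ m * Tr (some i) ((X 1) ^ (p - 1)))) ∧
    Submodule.span (ZMod p)
        (Set.range (fun a : Option (ZMod p) =>
          a.elim (y2 ^ m * Tr none ((X 1) ^ (p - 1)))
            (fun i => y1 ^ m * Tr (some i) ((X 1) ^ (p - 1))))) =
      (Submodule.span (ZMod p)
          {x : R | ∃ a b : ℕ, a + b = m ∧ x = y1 ^ a * y2 ^ b}).map
        (LinearMap.mulLeft (ZMod p) C) ⊔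
      Submodule.span (ZMod p)
        {x : R | ∃ l : ℕ, l ≤ p - 1 - m ∧ x = y1 ^ (p - 1 - l) * y2 ^ (m + l)} :=
  stmt13_general p hp hodd R y1 y2 C hC1 res hry1 hry1' hry2 hry2' hrC Tr hdc hquillen m hm
end

section
/- Let p be a prime. In F_p[y,u], the span over all n ≥ 1 and all (λ1,λ2) ∈ F_p² of the powers (λ1 y + λ2 u)^n satisfies: for each n with 1 ≤ n ≤ p-1, the elements (λ1 y + λ2 u)^n for (λ1,λ2) ∈ F_p² span the full space of homogeneous polynomials of degree n in y, u. -/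
open MvPolynomial Set Submodule

/-! By the binomial theorem, `(a • y + u) ^ n = ∑ₖ aᵏ (n choose k) • yᵏ uⁿ⁻ᵏ`. Taking `n + 1`
distinct values of `a`, the coefficient matrix is a Vandermonde matrix times the diagonal matrix
of binomial coefficients; for `n < p` both are invertible over `𝔽_p`, so the monomials
`yᵏ uⁿ⁻ᵏ`, which span the homogeneous polynomials of degree `n`, are combinations of the powers
`(a • y + u) ^ n`. -/

theorem span_range_sum_smul_of_isUnit_det {ι R M : Type*} [Fintype ι] [DecidableEq ι]
    [CommRing R] [AddCommGroup M] [Module R M] (A : Matrix ι ι R) (hA : IsUnit A.det)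
    (f : ι → M) :
    span R (range fun i => ∑ k, A i k • f k) = span R (range f) := by
  apply le_antisymm <;> rw [span_le] <;> rintro _ ⟨j, rfl⟩
  · exact sum_mem fun k _ => smul_mem _ _ (subset_span ⟨k, rfl⟩)
  · have hf : f j = ∑ i, A⁻¹ j i • ∑ k, A i k • f k := by
      simp only [Finset.smul_sum, smul_smul]
      rw [Finset.sum_comm]
      simp only [← Finset.sum_smul, ← Matrix.mul_apply, Matrix.nonsing_inv_mul A hA,
        Matrix.one_apply, ite_smul, one_smul, zero_smul, Finset.sum_ite_eq, Finset.mem_univ,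
        if_true]
    rw [SetLike.mem_coe, hf]
    exact sum_mem fun i _ => smul_mem _ _ (subset_span ⟨i, rfl⟩)

theorem isHomogeneous_smul_X_add_smul_X_pow {σ R : Type*} [CommSemiring R] (a b : R)
    (i j : σ) (n : ℕ) : IsHomogeneous ((a • X i + b • X j : MvPolynomial σ R) ^ n) n := by
  simp only [smul_eq_C_mul]
  simpa using ((isHomogeneous_C_mul_X a i).add (isHomogeneous_C_mul_X b j)).pow n

theorem smul_X_add_X_pow_eq_sum {σ R : Type*} [CommSemiring R] (a : R) (i j : σ) (n : ℕ) :
    (a • X i + X j : MvPolynomial σ R) ^ n =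
      ∑ k : Fin (n + 1), (a ^ (k : ℕ) * n.choose k) • (X i ^ (k : ℕ) * X j ^ (n - k)) := by
  rw [add_pow, ← Fin.sum_univ_eq_sum_range]
  refine Fintype.sum_congr _ _ fun k => ?_
  rw [smul_pow, smul_eq_C_mul, smul_eq_C_mul, ← C_eq_coe_nat, map_mul]
  ring

theorem homogeneousSubmodule_fin_two_eq_span {R : Type*} [CommSemiring R] (n : ℕ) :
    homogeneousSubmodule (Fin 2) R n =
      span R (range fun k : Fin (n + 1) =>
        (X 0 ^ (k : ℕ) * X 1 ^ (n - k) : MvPolynomial (Fin 2) R)) := by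
  apply le_antisymm
  · intro q hq
    rw [q.as_sum]
    refine sum_mem fun d hd => ?_
    have hdeg : d 0 + d 1 = n := by
      rw [← Fin.sum_univ_two, ← Finsupp.degree_eq_sum, Finsupp.degree_apply]
      exact (hq.degree_eq_sum_deg_support hd).symm
    have hmon : monomial d (coeff d q) = coeff d q • (X 0 ^ d 0 * X 1 ^ (n - d 0)) := by
      rw [monomial_eq, Finsupp.prod_fintype _ _ fun _ => pow_zero _, Fin.prod_univ_two,
        smul_eq_C_mul, show n - d 0 = d 1 by omega]
    rw [hmon]
    exact smul_mem _ _ (subset_span ⟨⟨d 0, by omega⟩, rfl⟩)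
  · rw [span_le]
    rintro _ ⟨k, rfl⟩
    simpa [Nat.add_sub_cancel' (Nat.le_of_lt_succ k.isLt)] using
      (isHomogeneous_X_pow (R := R) (0 : Fin 2) k).mul (isHomogeneous_X_pow 1 (n - k))

theorem span_pow_linearForm_eq_homogeneousSubmodule {K : Type*} [Field K] (n : ℕ)
    (v : Fin (n + 1) → K) (hv : Function.Injective v)
    (hchoose : ∀ k ≤ n, (n.choose k : K) ≠ 0) :
    span K {q : MvPolynomial (Fin 2) K | ∃ a b : K, q = (a • X 0 + b • X 1) ^ n} =
      homogeneousSubmodule (Fin 2) K n := by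
  apply le_antisymm
  · rw [span_le]
    rintro _ ⟨a, b, rfl⟩
    exact isHomogeneous_smul_X_add_smul_X_pow a b 0 1 n
  · set A := Matrix.vandermonde v * Matrix.diagonal fun k : Fin (n + 1) => (n.choose k : K)
    have hA : IsUnit A.det := by
      rw [isUnit_iff_ne_zero, Matrix.det_mul, Matrix.det_diagonal]
      exact mul_ne_zero (Matrix.det_vandermonde_ne_zero_iff.mpr hv)
        (Finset.prod_ne_zero_iff.mpr fun k _ => hchoose k (Nat.le_of_lt_succ k.isLt))
    rw [homogeneousSubmodule_fin_two_eq_span, ← span_range_sum_smul_of_isUnit_det A hA]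
    refine span_mono (range_subset_iff.mpr fun i => ⟨v i, 1, ?_⟩)
    simp [smul_X_add_X_pow_eq_sum, A, Matrix.mul_diagonal]

theorem stmt17_general (p : ℕ) (hp : p.Prime) (n : ℕ) (h2 : n ≤ p - 1) :
    Submodule.span (ZMod p)
        {q : MvPolynomial (Fin 2) (ZMod p) | ∃ a b : ZMod p, q = (a • X 0 + b • X 1) ^ n} =
      homogeneousSubmodule (Fin 2) (ZMod p) n := by
  have : Fact p.Prime := ⟨hp⟩
  have hnp : n < p := by have := hp.two_le; omega
  refine span_pow_linearForm_eq_homogeneousSubmodule n (fun i => ((i : ℕ) : ZMod p)) ?_ ?_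
  · intro i j hij
    rw [ZMod.natCast_eq_natCast_iff', Nat.mod_eq_of_lt (by omega),
      Nat.mod_eq_of_lt (by omega)] at hij
    exact Fin.ext hij
  · intro k hk
    rw [Ne, ZMod.natCast_eq_zero_iff, ← hp.coprime_iff_not_dvd]
    exact hp.coprime_choose_of_lt hnp hk

/-- In `F_p[y,u]` (`y = X 0`, `u = X 1`), for each `1 ≤ n ≤ p-1` the powers
`(λ1 y + λ2 u)^n`, for `(λ1,λ2) ∈ F_p²`, span the full space of homogeneous polynomials
of degree `n`. -/
theorem stmt17 (p : ℕ) (hp : p.Prime) (n : ℕ) (h1 : 1 ≤ n) (h2 : n ≤ p - 1) :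
    Submodule.span (ZMod p)
        {q : MvPolynomial (Fin 2) (ZMod p) | ∃ a b : ZMod p, q = (a • X 0 + b • X 1) ^ n} =
      homogeneousSubmodule (Fin 2) (ZMod p) n :=
  stmt17_general p hp n h2
end
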